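/- arXiv:1605.04059 — 2 statements merged into one kernel-verified Lean document; each statement's English description precedes it below -/
import Mathlib

section
/- Fix a fixed-design Cox partial likelihood with score U and information matrix J, with covariates bounded by |z_i^j| ≤ K₁ for all i, j. Let β₀ ∈ ℝ^p with support T₀ := {j : β₀ⱼ ≠ 0} of cardinality S ≥ 1, let q ≥ 1, and let β̂ ∈ ℝ^p and γ ≥ 0 satisfy ‖U(β₀)‖_∞ ≤ γ, ‖U(β̂)‖_∞ ≤ γ, and ‖β̂‖₁ ≤ ‖β₀‖₁. If the weak cone invertibility factor satisfies F_q(T₀; J(β₀)) > 0, then ‖β̂ − β₀‖_q ≤ 4 S^{1/q} γ exp(4K₁‖β₀‖₁) / F_q(T₀; J(β₀)). -/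
open Matrix Finset

noncomputable def l1 {p : ℕ} (h : Fin p → ℝ) : ℝ := ∑ j, |h j|
noncomputable def l2 {p : ℕ} (h : Fin p → ℝ) : ℝ := Real.sqrt (∑ j, (h j) ^ 2)
noncomputable def lqNorm {p : ℕ} (q : ℝ) (h : Fin p → ℝ) : ℝ := (∑ j, |h j| ^ q) ^ (1 / q)
noncomputable def linf {p : ℕ} (h : Fin p → ℝ) : ℝ := ⨆ j, |h j|
def restr {p : ℕ} (T : Finset (Fin p)) (h : Fin p → ℝ) : Fin p → ℝ :=
  fun j => if j ∈ T then h j else 0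
def coneC {p : ℕ} (T : Finset (Fin p)) (h : Fin p → ℝ) : Prop :=
  l1 (restr Tᶜ h) ≤ l1 (restr T h)
noncomputable def quad {p : ℕ} (M : Matrix (Fin p) (Fin p) ℝ) (h : Fin p → ℝ) : ℝ :=
  h ⬝ᵥ M.mulVec h

/-- `S⁰_i(β) = Σ_{k ∈ R_i} exp(z_kᵀβ)` for the fixed-design Cox partial likelihood. -/
noncomputable def coxS0 {n p : ℕ} (z : Fin n → Fin p → ℝ) (R : Fin n → Finset (Fin n))
    (i : Fin n) (β : Fin p → ℝ) : ℝ :=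
  ∑ k ∈ R i, Real.exp (z k ⬝ᵥ β)

/-- The score `U(β) = (1/n) Σ_{i ∈ D} (z_i − S¹_i(β)/S⁰_i(β))`. -/
noncomputable def coxU {n p : ℕ} (z : Fin n → Fin p → ℝ) (D : Finset (Fin n))
    (R : Fin n → Finset (Fin n)) (β : Fin p → ℝ) : Fin p → ℝ :=
  fun j => (n : ℝ)⁻¹ *
    ∑ i ∈ D, (z i j - (∑ k ∈ R i, Real.exp (z k ⬝ᵥ β) * z k j) / coxS0 z R i β)

/-- The information matrix
`J(β) = (1/n) Σ_{i ∈ D} (S²_i(β)/S⁰_i(β) − (S¹_i(β)/S⁰_i(β))(S¹_i(β)/S⁰_i(β))ᵀ)`. -/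
noncomputable def coxJ {n p : ℕ} (z : Fin n → Fin p → ℝ) (D : Finset (Fin n))
    (R : Fin n → Finset (Fin n)) (β : Fin p → ℝ) : Matrix (Fin p) (Fin p) ℝ :=
  fun a b => (n : ℝ)⁻¹ *
    ∑ i ∈ D,
      ((∑ k ∈ R i, Real.exp (z k ⬝ᵥ β) * z k a * z k b) / coxS0 z R i β -
        ((∑ k ∈ R i, Real.exp (z k ⬝ᵥ β) * z k a) / coxS0 z R i β) *
          ((∑ k ∈ R i, Real.exp (z k ⬝ᵥ β) * z k b) / coxS0 z R i β))

/-- Compatibility factor `κ(T₀; M) = inf_{0 ≠ h ∈ C_{T₀}} √|T₀| (hᵀMh)^{1/2} / ‖h_{T₀}‖₁`. -/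
noncomputable def kappa {p : ℕ} (T0 : Finset (Fin p)) (M : Matrix (Fin p) (Fin p) ℝ) : ℝ :=
  sInf {x | ∃ h : Fin p → ℝ, h ≠ 0 ∧ coneC T0 h ∧
    x = Real.sqrt (T0.card) * Real.sqrt (quad M h) / l1 (restr T0 h)}

/-- Restricted eigenvalue `RE(T₀; M) = inf_{0 ≠ h ∈ C_{T₀}} (hᵀMh)^{1/2} / ‖h‖₂`. -/
noncomputable def RE {p : ℕ} (T0 : Finset (Fin p)) (M : Matrix (Fin p) (Fin p) ℝ) : ℝ :=
  sInf {x | ∃ h : Fin p → ℝ, h ≠ 0 ∧ coneC T0 h ∧ x = Real.sqrt (quad M h) / l2 h}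

/-- Weak cone invertibility factor
`F_q(T₀; M) = inf_{0 ≠ h ∈ C_{T₀}} |T₀|^{1/q} (hᵀMh) / (‖h_{T₀}‖₁ ‖h‖_q)`. -/
noncomputable def Fq {p : ℕ} (q : ℝ) (T0 : Finset (Fin p)) (M : Matrix (Fin p) (Fin p) ℝ) : ℝ :=
  sInf {x | ∃ h : Fin p → ℝ, h ≠ 0 ∧ coneC T0 h ∧
    x = (T0.card : ℝ) ^ (1 / q) * quad M h / (l1 (restr T0 h) * lqNorm q h)}

/-! For each risk set, `S¹_i/S⁰_i` is the mean of `z` under the Gibbs weights `exp (z_kᵀβ)`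
and the `i`-th summand of `J(β)` is the corresponding covariance matrix, so `hᵀJ(β)h` is an
average of variances of `z_kᵀh`. Along the segment `β + t h` the derivative of the tilted mean
of `z_kᵀh` is its tilted variance, and when `|z_kᵀh| ≤ δ` the tilt changes every normalized
weight by a factor at least `e^{-2δ}`; the mean value theorem then gives the curvature bound
`e^{-2δ} hᵀJ(β)h ≤ hᵀ(U(β) - U(β + h))`. With `h = β̂ - β₀`, the condition `‖β̂‖₁ ≤ ‖β₀‖₁`
puts `h` in the cone `C_{T₀}`, so `‖h‖₁ ≤ 2‖h_{T₀}‖₁` and `δ = 2K₁‖β₀‖₁` works, while the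
score bounds give `hᵀ(U(β₀) - U(β̂)) ≤ 2γ‖h‖₁`. Comparing with the definition of `F_q`
finishes the proof. -/

section Norms

variable {p : ℕ}

lemma l1_nonneg (h : Fin p → ℝ) : 0 ≤ l1 h := Finset.sum_nonneg fun _ _ => abs_nonneg _

lemma l1_pos {h : Fin p → ℝ} (hh : h ≠ 0) : 0 < l1 h := by
  obtain ⟨j, hj⟩ := Function.ne_iff.1 hh
  exact Finset.sum_pos' (fun _ _ => abs_nonneg _) ⟨j, Finset.mem_univ _, abs_pos.2 hj⟩

lemma l1_restr (T : Finset (Fin p)) (h : Fin p → ℝ) : l1 (restr T h) = ∑ j ∈ T, |h j| := by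
  simp [l1, restr, apply_ite abs, Finset.sum_ite_mem]

lemma l1_eq_l1_restr_add_l1_restr_compl (T : Finset (Fin p)) (h : Fin p → ℝ) :
    l1 h = l1 (restr T h) + l1 (restr Tᶜ h) := by
  rw [l1_restr, l1_restr, Finset.sum_add_sum_compl, l1]

lemma l1_sub_le (x y : Fin p → ℝ) : l1 (x - y) ≤ l1 x + l1 y := by
  rw [l1, l1, l1, ← Finset.sum_add_distrib]
  exact Finset.sum_le_sum fun j _ => abs_sub _ _

lemma abs_dotProduct_le_mul_l1 {x : Fin p → ℝ} {K : ℝ} (hx : ∀ j, |x j| ≤ K) (h : Fin p → ℝ) :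
    |x ⬝ᵥ h| ≤ K * l1 h :=
  calc |x ⬝ᵥ h| ≤ ∑ j, |x j * h j| := Finset.abs_sum_le_sum_abs _ _
    _ ≤ ∑ j, K * |h j| := Finset.sum_le_sum fun j _ => by
        rw [abs_mul]
        exact mul_le_mul_of_nonneg_right (hx j) (abs_nonneg _)
    _ = K * l1 h := (Finset.mul_sum _ _ _).symm

lemma abs_le_linf (u : Fin p → ℝ) (j : Fin p) : |u j| ≤ linf u :=
  le_ciSup (f := fun j => |u j|) (Set.finite_range _).bddAbove j

lemma dotProduct_sub_le_of_linf_le {u v : Fin p → ℝ} {γ : ℝ} (hu : linf u ≤ γ)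
    (hv : linf v ≤ γ) (h : Fin p → ℝ) : h ⬝ᵥ (u - v) ≤ 2 * γ * l1 h := by
  refine (le_abs_self _).trans ?_
  rw [dotProduct_comm]
  refine abs_dotProduct_le_mul_l1 (fun j => ?_) h
  rw [Pi.sub_apply]
  linarith [abs_sub (u j) (v j), abs_le_linf u j, abs_le_linf v j]

lemma coneC_sub_of_l1_le {T : Finset (Fin p)} {β β₀ : Fin p → ℝ} (hsupp : ∀ j ∉ T, β₀ j = 0)
    (hl1 : l1 β ≤ l1 β₀) : coneC T (β - β₀) := by
  have hβ₀ : l1 (restr Tᶜ β₀) = 0 := by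
    rw [l1_restr]
    exact Finset.sum_eq_zero fun j hj => by rw [hsupp j (Finset.mem_compl.1 hj), abs_zero]
  have hT : l1 (restr T β₀) - l1 (restr T (β - β₀)) ≤ l1 (restr T β) := by
    rw [l1_restr, l1_restr, l1_restr, ← Finset.sum_sub_distrib]
    refine Finset.sum_le_sum fun j _ => ?_
    rw [Pi.sub_apply, abs_sub_comm]
    linarith [abs_sub_abs_le_abs_sub (β₀ j) (β j)]
  have hTc : l1 (restr Tᶜ (β - β₀)) = l1 (restr Tᶜ β) := by
    rw [l1_restr, l1_restr]
    exact Finset.sum_congr rfl fun j hj => by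
      rw [Pi.sub_apply, hsupp j (Finset.mem_compl.1 hj), sub_zero]
  unfold coneC
  linarith [l1_eq_l1_restr_add_l1_restr_compl T β, l1_eq_l1_restr_add_l1_restr_compl T β₀]

lemma l1_le_two_mul_l1_restr {T : Finset (Fin p)} {h : Fin p → ℝ} (hc : coneC T h) :
    l1 h ≤ 2 * l1 (restr T h) := by
  unfold coneC at hc
  linarith [l1_eq_l1_restr_add_l1_restr_compl T h]

lemma lqNorm_nonneg (q : ℝ) (h : Fin p → ℝ) : 0 ≤ lqNorm q h :=
  Real.rpow_nonneg (Finset.sum_nonneg fun _ _ => Real.rpow_nonneg (abs_nonneg _) q) _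

lemma lqNorm_pos (q : ℝ) {h : Fin p → ℝ} (hh : h ≠ 0) : 0 < lqNorm q h := by
  obtain ⟨j, hj⟩ := Function.ne_iff.1 hh
  refine Real.rpow_pos_of_pos (Finset.sum_pos' (fun _ _ => Real.rpow_nonneg (abs_nonneg _) q)
    ⟨j, Finset.mem_univ _, Real.rpow_pos_of_pos (abs_pos.2 hj) q⟩) _

lemma lqNorm_zero {q : ℝ} (hq : q ≠ 0) : lqNorm q (0 : Fin p → ℝ) = 0 := by
  simp [lqNorm, Real.zero_rpow hq, hq]

end Norms

section Gibbs

variable {ι : Type*} (s : Finset ι)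

noncomputable def gibbsMean (a f : ι → ℝ) : ℝ :=
  (∑ k ∈ s, Real.exp (a k) * f k) / ∑ k ∈ s, Real.exp (a k)

noncomputable def gibbsCov (a f g : ι → ℝ) : ℝ :=
  gibbsMean s a (f * g) - gibbsMean s a f * gibbsMean s a g

lemma gibbsMean_sum_mul {κ : Type*} (t : Finset κ) (a : ι → ℝ) (f : κ → ι → ℝ) (c : κ → ℝ) :
    gibbsMean s a (fun k => ∑ j ∈ t, f j k * c j) = ∑ j ∈ t, gibbsMean s a (f j) * c j := by
  simp only [gibbsMean, Finset.mul_sum, Finset.sum_div, Finset.sum_mul]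
  rw [Finset.sum_comm]
  exact Finset.sum_congr rfl fun j _ => Finset.sum_congr rfl fun k _ => by ring

lemma gibbsMean_dotProduct {κ : Type*} [Fintype κ] (a : ι → ℝ) (v : ι → κ → ℝ) (h : κ → ℝ) :
    gibbsMean s a (fun k => v k ⬝ᵥ h) = (fun j => gibbsMean s a (fun k => v k j)) ⬝ᵥ h :=
  gibbsMean_sum_mul s _ a (fun j k => v k j) h

lemma gibbsCov_comm (a f g : ι → ℝ) : gibbsCov s a f g = gibbsCov s a g f := by
  rw [gibbsCov, gibbsCov, mul_comm f, mul_comm (gibbsMean s a f)]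

lemma gibbsCov_dotProduct_left {κ : Type*} [Fintype κ] (a : ι → ℝ) (v : ι → κ → ℝ)
    (h : κ → ℝ) (g : ι → ℝ) :
    gibbsCov s a (fun k => v k ⬝ᵥ h) g = (fun j => gibbsCov s a (fun k => v k j) g) ⬝ᵥ h := by
  have hprod : (fun k => v k ⬝ᵥ h) * g = fun k => ∑ j, ((fun k => v k j) * g) k * h j := by
    ext k
    simp only [Pi.mul_apply, dotProduct, Finset.sum_mul]
    exact Finset.sum_congr rfl fun j _ => by ring
  rw [gibbsCov, hprod, gibbsMean_sum_mul, gibbsMean_dotProduct, dotProduct, Finset.sum_mul,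
    dotProduct, ← Finset.sum_sub_distrib]
  exact Finset.sum_congr rfl fun j _ => by rw [gibbsCov]; ring

lemma gibbsCov_self_eq (hs : s.Nonempty) (a f : ι → ℝ) (c : ℝ) :
    gibbsCov s a f f = ∑ k ∈ s, Real.exp (a k) / (∑ l ∈ s, Real.exp (a l)) * (f k - c) ^ 2
      - (gibbsMean s a f - c) ^ 2 := by
  have hZ : 0 < ∑ l ∈ s, Real.exp (a l) := Finset.sum_pos (fun _ _ => Real.exp_pos _) hs
  have hexpand : ∑ k ∈ s, Real.exp (a k) * (f k - c) ^ 2 = ∑ k ∈ s, Real.exp (a k) * (f k * f k)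
      - 2 * c * ∑ k ∈ s, Real.exp (a k) * f k + c ^ 2 * ∑ k ∈ s, Real.exp (a k) := by
    simp only [Finset.mul_sum, ← Finset.sum_sub_distrib, ← Finset.sum_add_distrib]
    exact Finset.sum_congr rfl fun k _ => by ring
  simp only [div_mul_eq_mul_div, ← Finset.sum_div, hexpand, gibbsCov, gibbsMean, Pi.mul_apply]
  field_simp
  ring

lemma gibbsCov_self_nonneg (a f : ι → ℝ) : 0 ≤ gibbsCov s a f f := by
  rcases s.eq_empty_or_nonempty with rfl | hs
  · simp [gibbsCov, gibbsMean]
  rw [gibbsCov_self_eq s hs a f (gibbsMean s a f), sub_self, sq, mul_zero, sub_zero]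
  exact Finset.sum_nonneg fun k _ => by positivity

lemma exp_neg_two_mul_gibbsWeight_le {a a' : ι → ℝ} {δ : ℝ}
    (hδ : ∀ k ∈ s, |a' k - a k| ≤ δ) {k : ι} (hk : k ∈ s) :
    Real.exp (-(2 * δ)) * (Real.exp (a k) / ∑ l ∈ s, Real.exp (a l))
      ≤ Real.exp (a' k) / ∑ l ∈ s, Real.exp (a' l) := by
  have hZ' : 0 < ∑ l ∈ s, Real.exp (a' l) := Finset.sum_pos (fun _ _ => Real.exp_pos _) ⟨k, hk⟩
  have hnum : Real.exp (-δ) * Real.exp (a k) ≤ Real.exp (a' k) := by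
    rw [← Real.exp_add, Real.exp_le_exp]
    linarith [(abs_le.1 (hδ k hk)).1]
  have hden : ∑ l ∈ s, Real.exp (a' l) ≤ Real.exp δ * ∑ l ∈ s, Real.exp (a l) := by
    rw [Finset.mul_sum]
    refine Finset.sum_le_sum fun l hl => ?_
    rw [← Real.exp_add, Real.exp_le_exp]
    linarith [(abs_le.1 (hδ l hl)).2]
  calc Real.exp (-(2 * δ)) * (Real.exp (a k) / ∑ l ∈ s, Real.exp (a l))
      = Real.exp (-δ) * Real.exp (a k) / (Real.exp δ * ∑ l ∈ s, Real.exp (a l)) := by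
        rw [two_mul, neg_add, Real.exp_add, Real.exp_neg δ]
        field_simp
    _ ≤ Real.exp (a' k) / ∑ l ∈ s, Real.exp (a' l) :=
        div_le_div₀ (Real.exp_pos _).le hnum hZ' hden

lemma exp_neg_two_mul_gibbsCov_self_le {a a' : ι → ℝ} {δ : ℝ}
    (hδ : ∀ k ∈ s, |a' k - a k| ≤ δ) (f : ι → ℝ) :
    Real.exp (-(2 * δ)) * gibbsCov s a f f ≤ gibbsCov s a' f f := by
  rcases s.eq_empty_or_nonempty with rfl | hs
  · simp [gibbsCov, gibbsMean]
  set m' := gibbsMean s a' f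
  calc Real.exp (-(2 * δ)) * gibbsCov s a f f
      ≤ Real.exp (-(2 * δ)) *
          ∑ k ∈ s, Real.exp (a k) / (∑ l ∈ s, Real.exp (a l)) * (f k - m') ^ 2 := by
        rw [gibbsCov_self_eq s hs a f m']
        gcongr
        linarith [sq_nonneg (gibbsMean s a f - m')]
    _ ≤ ∑ k ∈ s, Real.exp (a' k) / (∑ l ∈ s, Real.exp (a' l)) * (f k - m') ^ 2 := by
        rw [Finset.mul_sum]
        refine Finset.sum_le_sum fun k hk => ?_
        rw [← mul_assoc]
        gcongr
        exact exp_neg_two_mul_gibbsWeight_le s hδ hk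
    _ = gibbsCov s a' f f := by
        rw [gibbsCov_self_eq s hs a' f m', sub_self, sq, mul_zero, sub_zero]

lemma hasDerivAt_sum_exp_tilt (a b f : ι → ℝ) (t : ℝ) :
    HasDerivAt (fun t => ∑ k ∈ s, Real.exp (a k + t * b k) * f k)
      (∑ k ∈ s, Real.exp (a k + t * b k) * (b * f) k) t := by
  refine HasDerivAt.fun_sum fun k _ => ?_
  have hlin : HasDerivAt (fun t => a k + t * b k) (b k) t := by
    simpa using ((hasDerivAt_id t).mul_const (b k)).const_add (a k)
  exact (hlin.exp.mul_const (f k)).congr_deriv (by rw [Pi.mul_apply]; ring)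

lemma hasDerivAt_gibbsMean_tilt (hs : s.Nonempty) (a b f : ι → ℝ) (t : ℝ) :
    HasDerivAt (fun t => gibbsMean s (fun k => a k + t * b k) f)
      (gibbsCov s (fun k => a k + t * b k) b f) t := by
  have hZ := hasDerivAt_sum_exp_tilt s a b 1 t
  simp only [Pi.one_apply, mul_one] at hZ
  have hZpos : 0 < ∑ k ∈ s, Real.exp (a k + t * b k) :=
    Finset.sum_pos (fun _ _ => Real.exp_pos _) hs
  refine ((hasDerivAt_sum_exp_tilt s a b f t).div hZ hZpos.ne').congr_deriv ?_
  simp only [gibbsCov, gibbsMean, Pi.mul_apply]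
  field_simp

lemma exp_neg_two_mul_gibbsCov_le_gibbsMean_sub {b : ι → ℝ} {δ : ℝ}
    (hb : ∀ k ∈ s, |b k| ≤ δ) (a : ι → ℝ) :
    Real.exp (-(2 * δ)) * gibbsCov s a b b
      ≤ gibbsMean s (fun k => a k + b k) b - gibbsMean s a b := by
  rcases s.eq_empty_or_nonempty with rfl | hs
  · simp [gibbsCov, gibbsMean]
  have hderiv := hasDerivAt_gibbsMean_tilt s hs a b b
  have hcov : ∀ t ∈ interior (Set.Icc (0 : ℝ) 1), Real.exp (-(2 * δ)) * gibbsCov s a b b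
      ≤ deriv (fun t => gibbsMean s (fun k => a k + t * b k) b) t := by
    intro t ht
    rw [interior_Icc] at ht
    rw [(hderiv t).deriv]
    refine exp_neg_two_mul_gibbsCov_self_le s (fun k hk => ?_) b
    rw [add_sub_cancel_left, abs_mul, abs_of_pos ht.1]
    exact (mul_le_of_le_one_left (abs_nonneg _) ht.2.le).trans (hb k hk)
  have hmvt := (convex_Icc (0 : ℝ) 1).mul_sub_le_image_sub_of_le_deriv
    (fun t _ => (hderiv t).continuousAt.continuousWithinAt)
    (fun t _ => (hderiv t).differentiableAt.differentiableWithinAt) hcov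
    0 (Set.left_mem_Icc.2 zero_le_one) 1 (Set.right_mem_Icc.2 zero_le_one) zero_le_one
  simpa using hmvt

end Gibbs

section Cox

variable {n p : ℕ} (z : Fin n → Fin p → ℝ) (D : Finset (Fin n)) (R : Fin n → Finset (Fin n))

lemma coxU_apply (β : Fin p → ℝ) (j : Fin p) :
    coxU z D R β j = (n : ℝ)⁻¹ *
      ∑ i ∈ D, (z i j - gibbsMean (R i) (fun k => z k ⬝ᵥ β) (fun k => z k j)) := rfl

lemma coxJ_eq_smul_sum_gibbsCov (β : Fin p → ℝ) :
    coxJ z D R β = (n : ℝ)⁻¹ • ∑ i ∈ D, Matrix.of fun a b =>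
      gibbsCov (R i) (fun k => z k ⬝ᵥ β) (fun k => z k a) (fun k => z k b) := by
  ext a b
  simp only [coxJ, coxS0, gibbsCov, gibbsMean, Matrix.smul_apply, Matrix.sum_apply,
    Matrix.of_apply, Pi.mul_apply, smul_eq_mul, mul_assoc]

lemma quad_of_gibbsCov {ι : Type*} (s : Finset ι) (w : ι → ℝ) (v : ι → Fin p → ℝ)
    (h : Fin p → ℝ) :
    quad (Matrix.of fun a b => gibbsCov s w (fun k => v k a) (fun k => v k b)) h
      = gibbsCov s w (fun k => v k ⬝ᵥ h) (fun k => v k ⬝ᵥ h) := by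
  have hmulVec : (Matrix.of fun a b => gibbsCov s w (fun k => v k a) (fun k => v k b)) *ᵥ h
      = fun a => gibbsCov s w (fun k => v k a) (fun k => v k ⬝ᵥ h) := by
    ext a
    rw [gibbsCov_comm, gibbsCov_dotProduct_left]
    simp only [Matrix.mulVec, dotProduct, Matrix.of_apply, gibbsCov_comm s w (fun k => v k a)]
  rw [quad, hmulVec, gibbsCov_dotProduct_left, dotProduct_comm]

lemma quad_coxJ (β h : Fin p → ℝ) :
    quad (coxJ z D R β) h = (n : ℝ)⁻¹ *
      ∑ i ∈ D, gibbsCov (R i) (fun k => z k ⬝ᵥ β) (fun k => z k ⬝ᵥ h) (fun k => z k ⬝ᵥ h) := by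
  rw [coxJ_eq_smul_sum_gibbsCov, quad, Matrix.smul_mulVec, Matrix.sum_mulVec, dotProduct_smul,
    dotProduct_sum, smul_eq_mul]
  exact congrArg _ (Finset.sum_congr rfl fun i _ => quad_of_gibbsCov _ _ _ h)

lemma quad_coxJ_nonneg (β h : Fin p → ℝ) : 0 ≤ quad (coxJ z D R β) h := by
  rw [quad_coxJ]
  exact mul_nonneg (by positivity) (Finset.sum_nonneg fun i _ => gibbsCov_self_nonneg _ _ _)

lemma dotProduct_coxU_sub (β β' h : Fin p → ℝ) :
    h ⬝ᵥ (coxU z D R β - coxU z D R β') = (n : ℝ)⁻¹ * ∑ i ∈ D,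
      (gibbsMean (R i) (fun k => z k ⬝ᵥ β') (fun k => z k ⬝ᵥ h)
        - gibbsMean (R i) (fun k => z k ⬝ᵥ β) (fun k => z k ⬝ᵥ h)) := by
  have hsub : coxU z D R β - coxU z D R β' = (n : ℝ)⁻¹ • ∑ i ∈ D,
      ((fun j => gibbsMean (R i) (fun k => z k ⬝ᵥ β') (fun k => z k j))
        - fun j => gibbsMean (R i) (fun k => z k ⬝ᵥ β) (fun k => z k j)) := by
    ext j
    simp only [Pi.sub_apply, coxU_apply, Pi.smul_apply, Finset.sum_apply, smul_eq_mul,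
      ← mul_sub, ← Finset.sum_sub_distrib]
    congr 1
    exact Finset.sum_congr rfl fun i _ => by ring
  rw [hsub, dotProduct_comm, smul_dotProduct, sum_dotProduct, smul_eq_mul]
  simp only [sub_dotProduct, gibbsMean_dotProduct]

lemma exp_neg_two_mul_quad_coxJ_le {β h : Fin p → ℝ} {δ : ℝ}
    (hδ : ∀ k, |z k ⬝ᵥ h| ≤ δ) :
    Real.exp (-(2 * δ)) * quad (coxJ z D R β) h
      ≤ h ⬝ᵥ (coxU z D R β - coxU z D R (β + h)) := by
  rw [quad_coxJ, dotProduct_coxU_sub, mul_left_comm, Finset.mul_sum]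
  gcongr with i
  simpa only [dotProduct_add] using
    exp_neg_two_mul_gibbsCov_le_gibbsMean_sub (R i) (fun k _ => hδ k) (fun k => z k ⬝ᵥ β)

lemma quad_coxJ_le_of_linf_coxU_le {β β' : Fin p → ℝ} {γ δ : ℝ}
    (hU : linf (coxU z D R β) ≤ γ) (hU' : linf (coxU z D R β') ≤ γ)
    (hδ : ∀ k, |z k ⬝ᵥ (β' - β)| ≤ δ) :
    quad (coxJ z D R β) (β' - β) ≤ 2 * γ * Real.exp (2 * δ) * l1 (β' - β) := by
  have hcurv := exp_neg_two_mul_quad_coxJ_le z D R (β := β) hδ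
  rw [add_sub_cancel, Real.exp_neg, inv_mul_le_iff₀ (Real.exp_pos _)] at hcurv
  calc quad (coxJ z D R β) (β' - β)
      ≤ Real.exp (2 * δ) * ((β' - β) ⬝ᵥ (coxU z D R β - coxU z D R β')) := hcurv
    _ ≤ Real.exp (2 * δ) * (2 * γ * l1 (β' - β)) := by
        gcongr
        exact dotProduct_sub_le_of_linf_le hU hU' _
    _ = 2 * γ * Real.exp (2 * δ) * l1 (β' - β) := by ring

end Cox

section ConeInvertibility

variable {p : ℕ} {q : ℝ} {T : Finset (Fin p)} {M : Matrix (Fin p) (Fin p) ℝ}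

lemma Fq_le (hM : ∀ g, 0 ≤ quad M g) {h : Fin p → ℝ} (hh : h ≠ 0) (hc : coneC T h) :
    Fq q T M ≤ (T.card : ℝ) ^ (1 / q) * quad M h / (l1 (restr T h) * lqNorm q h) := by
  refine csInf_le ⟨0, ?_⟩ ⟨h, hh, hc, rfl⟩
  rintro x ⟨g, -, -, rfl⟩
  exact div_nonneg (mul_nonneg (Real.rpow_nonneg (Nat.cast_nonneg _) _) (hM g))
    (mul_nonneg (l1_nonneg _) (lqNorm_nonneg q g))

lemma lqNorm_le_of_quad_le_mul_l1 (hM : ∀ g, 0 ≤ quad M g) (hF : 0 < Fq q T M)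
    {h : Fin p → ℝ} (hh : h ≠ 0) (hc : coneC T h) {C : ℝ}
    (hquad : quad M h ≤ C * l1 (restr T h)) :
    lqNorm q h ≤ (T.card : ℝ) ^ (1 / q) * C / Fq q T M := by
  have hL : 0 < l1 (restr T h) := by linarith [l1_pos hh, l1_le_two_mul_l1_restr hc]
  have hFle := Fq_le (q := q) hM hh hc
  rw [le_div_iff₀ (mul_pos hL (lqNorm_pos q hh))] at hFle
  rw [le_div_iff₀ hF]
  refine le_of_mul_le_mul_right ?_ hL
  calc lqNorm q h * Fq q T M * l1 (restr T h)
      = Fq q T M * (l1 (restr T h) * lqNorm q h) := by ring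
    _ ≤ (T.card : ℝ) ^ (1 / q) * quad M h := hFle
    _ ≤ (T.card : ℝ) ^ (1 / q) * (C * l1 (restr T h)) :=
        mul_le_mul_of_nonneg_left hquad (Real.rpow_nonneg (Nat.cast_nonneg _) _)
    _ = (T.card : ℝ) ^ (1 / q) * C * l1 (restr T h) := by ring

end ConeInvertibility

theorem stmt10_general {n p : ℕ} (z : Fin n → Fin p → ℝ) (D : Finset (Fin n))
    (R : Fin n → Finset (Fin n))
    (K₁ : ℝ) (hz : ∀ i j, |z i j| ≤ K₁)
    (β₀ : Fin p → ℝ) (T0 : Finset (Fin p)) (hT0 : ∀ j, j ∈ T0 ↔ β₀ j ≠ 0)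
    (S : ℕ) (hS : T0.card = S) (q : ℝ) (hq : 1 ≤ q)
    (βhat : Fin p → ℝ) (γ : ℝ) (hγ : 0 ≤ γ)
    (hU0 : linf (coxU z D R β₀) ≤ γ) (hUhat : linf (coxU z D R βhat) ≤ γ)
    (hl1 : l1 βhat ≤ l1 β₀)
    (hFq : 0 < Fq q T0 (coxJ z D R β₀)) :
    lqNorm q (βhat - β₀) ≤
      4 * (S : ℝ) ^ (1 / q) * γ * Real.exp (4 * K₁ * l1 β₀) / Fq q T0 (coxJ z D R β₀) := by
  set h := βhat - β₀
  rcases eq_or_ne h 0 with h0 | hne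
  · rw [h0, lqNorm_zero (by linarith)]
    positivity
  have hcone : coneC T0 h := coneC_sub_of_l1_le (fun j hj => not_not.1 (mt (hT0 j).2 hj)) hl1
  obtain ⟨j₀, -⟩ := Function.ne_iff.1 hne
  have hδ : ∀ k, |z k ⬝ᵥ h| ≤ 2 * K₁ * l1 β₀ := fun k => by
    have hK₁ : 0 ≤ K₁ := (abs_nonneg _).trans (hz k j₀)
    calc |z k ⬝ᵥ h| ≤ K₁ * l1 h := abs_dotProduct_le_mul_l1 (hz k) h
      _ ≤ K₁ * (l1 βhat + l1 β₀) := mul_le_mul_of_nonneg_left (l1_sub_le _ _) hK₁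
      _ ≤ 2 * K₁ * l1 β₀ := by nlinarith
  have hquad : quad (coxJ z D R β₀) h
      ≤ 4 * γ * Real.exp (4 * K₁ * l1 β₀) * l1 (restr T0 h) :=
    calc quad (coxJ z D R β₀) h ≤ 2 * γ * Real.exp (2 * (2 * K₁ * l1 β₀)) * l1 h :=
          quad_coxJ_le_of_linf_coxU_le z D R hU0 hUhat hδ
      _ ≤ 2 * γ * Real.exp (2 * (2 * K₁ * l1 β₀)) * (2 * l1 (restr T0 h)) := by
          gcongr
          exact l1_le_two_mul_l1_restr hcone
      _ = 4 * γ * Real.exp (4 * K₁ * l1 β₀) * l1 (restr T0 h) := by ring_nf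
  calc lqNorm q h ≤ (T0.card : ℝ) ^ (1 / q) * (4 * γ * Real.exp (4 * K₁ * l1 β₀))
        / Fq q T0 (coxJ z D R β₀) :=
        lqNorm_le_of_quad_le_mul_l1 (quad_coxJ_nonneg z D R β₀) hFq hne hcone hquad
    _ = _ := by rw [hS]; ring

/-- `l_q` bound via the weak cone invertibility factor. -/
theorem stmt10 {n p : ℕ} (z : Fin n → Fin p → ℝ) (D : Finset (Fin n))
    (R : Fin n → Finset (Fin n)) (hR : ∀ i ∈ D, (R i).Nonempty)
    (K₁ : ℝ) (hz : ∀ i j, |z i j| ≤ K₁)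
    (β₀ : Fin p → ℝ) (T0 : Finset (Fin p)) (hT0 : ∀ j, j ∈ T0 ↔ β₀ j ≠ 0)
    (S : ℕ) (hS : T0.card = S) (hS1 : 1 ≤ S) (q : ℝ) (hq : 1 ≤ q)
    (βhat : Fin p → ℝ) (γ : ℝ) (hγ : 0 ≤ γ)
    (hU0 : linf (coxU z D R β₀) ≤ γ) (hUhat : linf (coxU z D R βhat) ≤ γ)
    (hl1 : l1 βhat ≤ l1 β₀)
    (hFq : 0 < Fq q T0 (coxJ z D R β₀)) :
    lqNorm q (βhat - β₀) ≤
      4 * (S : ℝ) ^ (1 / q) * γ * Real.exp (4 * K₁ * l1 β₀) / Fq q T0 (coxJ z D R β₀) :=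
  stmt10_general z D R K₁ hz β₀ T0 hT0 S hS q hq βhat γ hγ hU0 hUhat hl1 hFq
end

section
/- Let Σ be a positive semidefinite p × p real matrix, T₀ ⊆ {1,…,p} with |T₀| = S ≥ 1, let q ≥ 1, and let ε ≥ 0 and c ≥ 0. Suppose h ∈ C_{T₀} satisfies hᵀΣh ≤ ε‖h‖₁² + c‖h‖₁, and suppose the weak cone invertibility factor satisfies F_q(T₀; Σ) > 0. Then ‖h‖_q ≤ 2 S^{1/q} (ε‖h‖₁ + c) / F_q(T₀; Σ). -/
open Matrix Finset

/- Testing the infimum defining `F_q` at `h` itself gives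
`F_q ‖h_{T₀}‖₁ ‖h‖_q ≤ S^{1/q} hᵀMh ≤ S^{1/q} (ε‖h‖₁ + c) ‖h‖₁`, and the cone condition gives
`‖h‖₁ ≤ 2 ‖h_{T₀}‖₁`; cancelling `‖h_{T₀}‖₁` yields the bound. -/

/-- `Real.sInf` of a set that is not bounded below is `0`. -/
lemma Real.sInf_le_of_sInf_pos {s : Set ℝ} {x : ℝ} (hs : 0 < sInf s) (hx : x ∈ s) :
    sInf s ≤ x := by
  refine csInf_le ?_ hx
  by_contra hbdd
  rw [Real.sInf_of_not_bddBelow hbdd] at hs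
  exact lt_irrefl 0 hs

section Norms

variable {p : ℕ}

lemma l1_le_two_mul_l1_restr_of_coneC {T : Finset (Fin p)} {h : Fin p → ℝ} (hh : coneC T h) :
    l1 h ≤ 2 * l1 (restr T h) := by
  rw [l1_eq_l1_restr_add_l1_restr_compl T h]
  unfold coneC at hh
  linarith

end Norms

section WeakConeInvertibility

variable {p : ℕ} {q : ℝ} {T0 : Finset (Fin p)} {M : Matrix (Fin p) (Fin p) ℝ} {h : Fin p → ℝ}

lemma Fq_le_of_coneC (hF : 0 < Fq q T0 M) (hh : h ≠ 0) (hcone : coneC T0 h) :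
    Fq q T0 M ≤ (T0.card : ℝ) ^ (1 / q) * quad M h / (l1 (restr T0 h) * lqNorm q h) :=
  Real.sInf_le_of_sInf_pos hF ⟨h, hh, hcone, rfl⟩

/-- With the junk value `x / 0 = 0`, a vanishing denominator would force `F_q ≤ 0`. -/
lemma l1_restr_mul_lqNorm_pos_of_Fq_pos (hF : 0 < Fq q T0 M) (hh : h ≠ 0)
    (hcone : coneC T0 h) : 0 < l1 (restr T0 h) * lqNorm q h := by
  refine (mul_nonneg (l1_nonneg _) (lqNorm_nonneg q h)).lt_of_ne fun hzero => ?_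
  have hle := Fq_le_of_coneC hF hh hcone
  rw [← hzero, div_zero] at hle
  exact hF.not_ge hle

lemma Fq_mul_lqNorm_mul_l1_restr_le (hF : 0 < Fq q T0 M) (hh : h ≠ 0) (hcone : coneC T0 h) :
    Fq q T0 M * lqNorm q h * l1 (restr T0 h) ≤ (T0.card : ℝ) ^ (1 / q) * quad M h := by
  have hpos := l1_restr_mul_lqNorm_pos_of_Fq_pos hF hh hcone
  have hle := Fq_le_of_coneC hF hh hcone
  rw [le_div_iff₀ hpos] at hle
  linarith

end WeakConeInvertibility

theorem stmt13_general {p : ℕ} (M : Matrix (Fin p) (Fin p) ℝ)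
    (T0 : Finset (Fin p)) (S : ℕ) (hS : T0.card = S)
    (q : ℝ) (hq : 1 ≤ q) (ε c : ℝ) (hε : 0 ≤ ε) (hc : 0 ≤ c)
    (h : Fin p → ℝ) (hcone : coneC T0 h)
    (hquad : quad M h ≤ ε * l1 h ^ 2 + c * l1 h)
    (hFq : 0 < Fq q T0 M) :
    lqNorm q h ≤ 2 * (S : ℝ) ^ (1 / q) * (ε * l1 h + c) / Fq q T0 M := by
  have hK : 0 ≤ (S : ℝ) ^ (1 / q) := by positivity
  have hrate : 0 ≤ ε * l1 h + c := by have := l1_nonneg h; positivity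
  rcases eq_or_ne h 0 with rfl | hh
  · rw [lqNorm_zero (by linarith)]
    exact div_nonneg (mul_nonneg (mul_nonneg two_pos.le hK) hrate) hFq.le
  have hA : 0 < l1 (restr T0 h) :=
    pos_of_mul_pos_left (l1_restr_mul_lqNorm_pos_of_Fq_pos hFq hh hcone) (lqNorm_nonneg q h)
  rw [le_div_iff₀ hFq]
  refine le_of_mul_le_mul_right ?_ hA
  calc lqNorm q h * Fq q T0 M * l1 (restr T0 h)
      = Fq q T0 M * lqNorm q h * l1 (restr T0 h) := by ring
    _ ≤ (S : ℝ) ^ (1 / q) * quad M h := hS ▸ Fq_mul_lqNorm_mul_l1_restr_le hFq hh hcone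
    _ ≤ (S : ℝ) ^ (1 / q) * ((ε * l1 h + c) * l1 h) := by gcongr; linarith
    _ ≤ (S : ℝ) ^ (1 / q) * ((ε * l1 h + c) * (2 * l1 (restr T0 h))) := by
      gcongr; exact l1_le_two_mul_l1_restr_of_coneC hcone
    _ = 2 * (S : ℝ) ^ (1 / q) * (ε * l1 h + c) * l1 (restr T0 h) := by ring

/-- deterministic core of Theorem 4.5(ii): `l_q` bound. -/
theorem stmt13 {p : ℕ} (M : Matrix (Fin p) (Fin p) ℝ) (hM : M.PosSemidef)
    (T0 : Finset (Fin p)) (S : ℕ) (hS : T0.card = S) (hS1 : 1 ≤ S)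
    (q : ℝ) (hq : 1 ≤ q) (ε c : ℝ) (hε : 0 ≤ ε) (hc : 0 ≤ c)
    (h : Fin p → ℝ) (hcone : coneC T0 h)
    (hquad : quad M h ≤ ε * l1 h ^ 2 + c * l1 h)
    (hFq : 0 < Fq q T0 M) :
    lqNorm q h ≤ 2 * (S : ℝ) ^ (1 / q) * (ε * l1 h + c) / Fq q T0 M :=
  stmt13_general M T0 S hS q hq ε c hε hc h hcone hquad hFq
end
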